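/- arXiv:1301.3963 — 4 statements merged into one kernel-verified Lean document; each statement's English description precedes it below -/
import Mathlib

section
/- Pisier's inequality for barycentric spaces: Fix m ∈ ℕ, p,K ∈ [1,∞) and a metric space (X,d_X) that is p-barycentric with constant K via the barycenter-type map B : P_X → X. Let Ω be a finite set and μ a probability measure on Ω with μ(ω) > 0 for every ω ∈ Ω. Suppose {Ω,∅} = F_0 ⊆ F_1 ⊆ … ⊆ F_m ⊆ 2^Ω is a filtration of σ-algebras with respect to which Z_0,…,Z_m : Ω → X is an X-valued martingale (i.e., B(Z_i|F_{i−1}) = Z_{i−1} for i = 1,…,m). Then for every z ∈ X: K^p ∫_Ω d_X(Z_0,z)^p dμ + Σ_{t=0}^{m−1} ∫_Ω d_X(Z_{t+1},Z_t)^p dμ ≤ K^p ∫_Ω d_X(Z_m,z)^p dμ. -/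
open scoped BigOperators ENNReal
open scoped Classical

noncomputable section

/-- A finitely supported probability measure on `X`. -/
structure FinProb (X : Type*) where
  w : X →₀ ℝ
  nonneg : ∀ x, 0 ≤ w x
  total : w.sum (fun _ r => r) = 1

namespace FinProb

/-- The Dirac point mass at `x`. -/
def dirac {X : Type*} (x : X) : FinProb X where
  w := Finsupp.single x 1
  nonneg := fun y => by
    rw [Finsupp.single_apply]
    split <;> norm_num
  total := Finsupp.sum_single_index rfl

/-- The probability measure `∑ i, w i • δ_{Z i}` for nonnegative weights summing to 1. -/
def mix {ι X : Type*} [Fintype ι] (w : ι → ℝ) (Z : ι → X)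
    (hw : ∀ i, 0 ≤ w i) (h1 : ∑ i, w i = 1) : FinProb X where
  w := ∑ i, Finsupp.single (Z i) (w i)
  nonneg := fun x => by
    rw [Finset.sum_apply']
    refine Finset.sum_nonneg fun i _ => ?_
    rw [Finsupp.single_apply]
    split
    · exact hw i
    · exact le_rfl
  total := by
    rw [← Finsupp.sum_finset_sum_index (fun _ => rfl) (fun _ _ _ => rfl)]
    have h : ∀ i ∈ (Finset.univ : Finset ι),
        (Finsupp.single (Z i) (w i)).sum (fun _ r => r) = w i :=
      fun i _ => Finsupp.sum_single_index rfl
    rw [Finset.sum_congr rfl h]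
    exact h1

/-- `mix` with normalization of the weights. -/
def mixN {ι X : Type*} [Fintype ι] (w : ι → ℝ) (Z : ι → X)
    (hw : ∀ i, 0 ≤ w i) (hpos : 0 < ∑ i, w i) : FinProb X :=
  mix (fun i => w i / ∑ j, w j) Z
    (fun i => div_nonneg (hw i) hpos.le)
    (by rw [← Finset.sum_div, div_self (ne_of_gt hpos)])

/-- Integral of `f : X → ℝ` against `μ`. -/
def exp {X : Type*} (μ : FinProb X) (f : X → ℝ) : ℝ :=
  μ.w.sum fun x r => r * f x

end FinProb

/-- `π` is a coupling of `μ` and `ν`. -/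
def IsCoupling {X : Type*} (π : FinProb (X × X)) (μ ν : FinProb X) : Prop :=
  (∀ x : X, (π.w.sum fun q r => if q.1 = x then r else 0) = μ.w x) ∧
  (∀ y : X, (π.w.sum fun q r => if q.2 = y then r else 0) = ν.w y)

/-- The Wasserstein `p` distance between finitely supported probability measures. -/
def wassersteinDist {X : Type*} [MetricSpace X] (p : ℝ) (μ ν : FinProb X) : ℝ :=
  sInf {c : ℝ | ∃ π : FinProb (X × X), IsCoupling π μ ν ∧
    c = (π.exp fun q => dist q.1 q.2 ^ p) ^ p⁻¹}

/-- A barycenter map sends Dirac masses to their base points. -/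
def IsBarycenterMap {X : Type*} (bary : FinProb X → X) : Prop :=
  ∀ x : X, bary (FinProb.dirac x) = x

/-- `X` is `W_p` barycentric with constant `Γ` via the barycenter map `bary`. -/
def IsWBarycentric {X : Type*} [MetricSpace X] (p Γ : ℝ) (bary : FinProb X → X) : Prop :=
  IsBarycenterMap bary ∧
    ∀ μ ν : FinProb X, dist (bary μ) (bary ν) ≤ Γ * wassersteinDist p μ ν

/-- `X` is `p`-barycentric with constant `K` via the map `bary`. -/
def IsPBarycentric {X : Type*} [MetricSpace X] (p K : ℝ) (bary : FinProb X → X) : Prop :=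
  ∀ (x : X) (μ : FinProb X),
    dist x (bary μ) ^ p + K ^ (-p) * (μ.exp fun y => dist (bary μ) y ^ p)
      ≤ μ.exp fun y => dist x y ^ p

/-- A (possibly rectangular) matrix is stochastic if it has nonnegative entries and
each row sums to `1`. -/
def IsStochastic {n m : ℕ} (A : Matrix (Fin n) (Fin m) ℝ) : Prop :=
  (∀ i j, 0 ≤ A i j) ∧ ∀ i, ∑ j, A i j = 1

/-- `A` is reversible relative to the probability vector `π`. -/
def IsReversible {n : ℕ} (A : Matrix (Fin n) (Fin n) ℝ) (π : Fin n → ℝ) : Prop :=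
  ∀ i j, π i * A i j = π j * A j i

/-- `π` is a probability vector. -/
def IsProbVec {n : ℕ} (π : Fin n → ℝ) : Prop :=
  (∀ i, 0 ≤ π i) ∧ ∑ i, π i = 1

/-- The Cesàro average `𝒜_t(A) = (1/t) ∑_{s=1}^t A^s`. -/
def cesaro {n : ℕ} (A : Matrix (Fin n) (Fin n) ℝ) (t : ℕ) : Matrix (Fin n) (Fin n) ℝ :=
  (t : ℝ)⁻¹ • ∑ s ∈ Finset.Icc 1 t, A ^ s

/-- `X` has Markov type `p` with constant `M`. -/
def HasMarkovType (X : Type*) [MetricSpace X] (p M : ℝ) : Prop :=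
  ∀ (n t : ℕ), 0 < n → 0 < t → ∀ (π : Fin n → ℝ) (A : Matrix (Fin n) (Fin n) ℝ),
    IsProbVec π → IsStochastic A → IsReversible A π → ∀ x : Fin n → X,
      ∑ i, ∑ j, π i * (A ^ t) i j * dist (x i) (x j) ^ p ≤
        M ^ p * t * ∑ i, ∑ j, π i * A i j * dist (x i) (x j) ^ p

/-- `X` has metric Markov cotype `p` with constant `N`. -/
def HasMetricMarkovCotype (X : Type*) [MetricSpace X] (p N : ℝ) : Prop :=
  ∀ (n t : ℕ), 0 < n → 0 < t → ∀ (π : Fin n → ℝ) (A : Matrix (Fin n) (Fin n) ℝ),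
    IsProbVec π → IsStochastic A → IsReversible A π → ∀ x : Fin n → X,
      ∃ y : Fin n → X,
        (∑ i, π i * dist (x i) (y i) ^ p) +
          t * ∑ i, ∑ j, π i * A i j * dist (y i) (y j) ^ p ≤
        N ^ p * ∑ i, ∑ j, π i * cesaro A t i j * dist (x i) (x j) ^ p

/-- The Markov type `p` constant `M_p(X)`. -/
def markovTypeConst (X : Type*) [MetricSpace X] (p : ℝ) : ℝ :=
  sInf {M : ℝ | 0 < M ∧ HasMarkovType X p M}

/-- The metric Markov cotype `p` constant `N_p(X)`. -/
def markovCotypeConst (X : Type*) [MetricSpace X] (p : ℝ) : ℝ :=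
  sInf {N : ℝ | 0 < N ∧ HasMetricMarkovCotype X p N}

/-- The nonlinear spectral gap quantity `γ₊(A, d_X^p)`. -/
def gammaPlus (X : Type*) [MetricSpace X] {n : ℕ} (A : Matrix (Fin n) (Fin n) ℝ)
    (p : ℝ) : ℝ≥0∞ :=
  sInf {g : ℝ≥0∞ | ∀ x y : Fin n → X,
    ENNReal.ofReal (((n : ℝ) ^ 2)⁻¹ * ∑ i, ∑ j, dist (x i) (y j) ^ p) ≤
      (g / (n : ℝ≥0∞)) * ENNReal.ofReal (∑ i, ∑ j, A i j * dist (x i) (y j) ^ p)}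

/-- The metric of `L_p^n(X)`. -/
def dLpn {X : Type*} [MetricSpace X] (p : ℝ) {n : ℕ} (f g : Fin n → X) : ℝ :=
  ((n : ℝ)⁻¹ * ∑ i, dist (f i) (g i) ^ p) ^ p⁻¹

/-- The barycenter `B(f) = B((1/n) ∑ δ_{f(i)})` of `f : Fin n → X`. -/
def baryFun {X : Type*} [MetricSpace X] (bary : FinProb X → X) {n : ℕ} (hn : 0 < n)
    (f : Fin n → X) : X :=
  bary (FinProb.mixN (fun _ : Fin n => 1) f (fun _ => zero_le_one)
    (by
      simp only [Finset.sum_const, Finset.card_univ, Fintype.card_fin, nsmul_eq_mul, mul_one]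
      exact_mod_cast hn))

/-- The nonlinear action `(A ⊗ I_X^n)(f)(i) = B(∑_j a_{ij} δ_{f(j)})`. -/
def matAct {X : Type*} [MetricSpace X] (bary : FinProb X → X) {n : ℕ}
    (A : Matrix (Fin n) (Fin n) ℝ) (hA : IsStochastic A) (f : Fin n → X) : Fin n → X :=
  fun i => bary (FinProb.mix (fun j => A i j) f (fun j => hA.1 i j) (hA.2 i))

/-- The quantity `λ_p(T)`. -/
def lambdaP {X : Type*} [MetricSpace X] (p : ℝ) {n : ℕ} (hn : 0 < n)
    (bary : FinProb X → X) (T : (Fin n → X) → (Fin n → X)) : ℝ≥0∞ :=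
  sInf {l : ℝ≥0∞ | ∀ f : Fin n → X,
    ENNReal.ofReal (dLpn p (T f) (fun _ => baryFun bary hn (T f))) ≤
      l * ENNReal.ofReal (dLpn p f (fun _ => baryFun bary hn f))}

/-- A finite σ-algebra on a finite set `Ω`, described by its atoms. -/
structure FinPartition (Ω : Type*) [Fintype Ω] where
  atom : Ω → Finset Ω
  mem_atom : ∀ ω, ω ∈ atom ω
  atom_eq : ∀ ω ω', ω' ∈ atom ω → atom ω' = atom ω

/-- The conditional barycenter `B(Z | F)`. -/
def condBary {Ω X : Type*} [Fintype Ω] (bary : FinProb X → X)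
    (μ : Ω → ℝ) (hμ : ∀ ω, 0 < μ ω) (F : FinPartition Ω) (Z : Ω → X) : Ω → X :=
  fun ω => bary (FinProb.mixN (fun a : {a // a ∈ F.atom ω} => μ a) (fun a => Z a)
    (fun a => (hμ a).le)
    (Finset.sum_pos (fun a _ => hμ a) ⟨⟨ω, F.mem_atom ω⟩, Finset.mem_univ _⟩))

/-!
Apply the `p`-barycentric inequality, with base point `z`, to the conditional law of `Z (t + 1)`
on each atom of `F t`, whose barycenter is `Z t` by the martingale property. Averaging over `Ω`
(the tower property) yields
`∫ d(Z t, z)ᵖ + K⁻ᵖ ∫ d(Z (t + 1), Z t)ᵖ ≤ ∫ d(Z (t + 1), z)ᵖ`;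
multiply by `Kᵖ` and telescope over `t < m`.
-/

theorem FinProb.exp_mix {ι X : Type*} [Fintype ι] (w : ι → ℝ) (Z : ι → X)
    (hw : ∀ i, 0 ≤ w i) (h1 : ∑ i, w i = 1) (f : X → ℝ) :
    (FinProb.mix w Z hw h1).exp f = ∑ i, w i * f (Z i) := by
  unfold FinProb.exp FinProb.mix
  rw [← Finsupp.sum_finsetSum_index (fun x => zero_mul (f x)) (fun x r s => add_mul r s (f x))]
  exact Finset.sum_congr rfl fun i _ => Finsupp.sum_single_index (zero_mul _)

namespace FinPartition

variable {Ω : Type*} [Fintype Ω] (F : FinPartition Ω)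

theorem mem_atom_comm {a ω : Ω} (h : a ∈ F.atom ω) : ω ∈ F.atom a := by
  rw [F.atom_eq ω a h]
  exact F.mem_atom ω

theorem sum_atom_pos {μ : Ω → ℝ} (hμ : ∀ ω, 0 < μ ω) (ω : Ω) : 0 < ∑ a ∈ F.atom ω, μ a :=
  Finset.sum_pos (fun a _ => hμ a) ⟨ω, F.mem_atom ω⟩

def condExp (μ h : Ω → ℝ) (ω : Ω) : ℝ :=
  (∑ a ∈ F.atom ω, μ a)⁻¹ * ∑ a ∈ F.atom ω, μ a * h a

theorem condExp_congr {μ h h' : Ω → ℝ} {ω : Ω} (hh : ∀ a ∈ F.atom ω, h a = h' a) :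
    F.condExp μ h ω = F.condExp μ h' ω := by
  unfold condExp
  rw [Finset.sum_congr rfl fun a ha => congrArg (μ a * ·) (hh a ha)]

theorem sum_mul_condExp {μ : Ω → ℝ} (hμ : ∀ ω, 0 < μ ω) (h : Ω → ℝ) :
    ∑ ω, μ ω * F.condExp μ h ω = ∑ ω, μ ω * h ω := by
  have hswap : ∑ ω, ∑ a ∈ F.atom ω, μ ω * (∑ b ∈ F.atom ω, μ b)⁻¹ * (μ a * h a)
      = ∑ a, ∑ ω ∈ F.atom a, μ ω * (∑ b ∈ F.atom ω, μ b)⁻¹ * (μ a * h a) :=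
    Finset.sum_comm' fun ω a => ⟨fun ⟨_, ha⟩ => ⟨F.mem_atom_comm ha, Finset.mem_univ _⟩,
      fun ⟨hω, _⟩ => ⟨Finset.mem_univ _, F.mem_atom_comm hω⟩⟩
  calc ∑ ω, μ ω * F.condExp μ h ω
      = ∑ ω, ∑ a ∈ F.atom ω, μ ω * (∑ b ∈ F.atom ω, μ b)⁻¹ * (μ a * h a) := by
        simp only [condExp, Finset.mul_sum, mul_assoc]
    _ = ∑ a, ∑ ω ∈ F.atom a, μ ω * (∑ b ∈ F.atom a, μ b)⁻¹ * (μ a * h a) := by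
        rw [hswap]
        refine Finset.sum_congr rfl fun a _ => Finset.sum_congr rfl fun ω hω => ?_
        rw [F.atom_eq a ω hω]
    _ = ∑ a, μ a * h a := by
        simp only [← Finset.sum_mul]
        simp [mul_inv_cancel₀ (F.sum_atom_pos hμ _).ne']

def condLaw {X : Type*} (μ : Ω → ℝ) (hμ : ∀ ω, 0 < μ ω) (W : Ω → X) (ω : Ω) : FinProb X :=
  FinProb.mixN (fun a : {a // a ∈ F.atom ω} => μ a) (fun a => W a) (fun a => (hμ a).le)
    (Finset.sum_pos (fun a _ => hμ a) ⟨⟨ω, F.mem_atom ω⟩, Finset.mem_univ _⟩)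

variable {X : Type*} {μ : Ω → ℝ} (hμ : ∀ ω, 0 < μ ω) (W : Ω → X)

theorem condBary_eq_bary_condLaw (bary : FinProb X → X) (ω : Ω) :
    condBary bary μ hμ F W ω = bary (F.condLaw μ hμ W ω) := rfl

theorem exp_condLaw (f : X → ℝ) (ω : Ω) :
    (F.condLaw μ hμ W ω).exp f = F.condExp μ (f ∘ W) ω := by
  unfold condLaw FinProb.mixN condExp
  rw [FinProb.exp_mix, Finset.sum_coe_sort (F.atom ω) μ,
    Finset.sum_coe_sort (F.atom ω) fun a => μ a / (∑ b ∈ F.atom ω, μ b) * f (W a),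
    Finset.mul_sum]
  exact Finset.sum_congr rfl fun a _ => by simp only [Function.comp]; ring

theorem condLaw_eq_of_mem_atom {a ω : Ω} (ha : a ∈ F.atom ω) :
    F.condLaw μ hμ W a = F.condLaw μ hμ W ω := by
  unfold condLaw
  generalize_proofs h₁ h₂
  revert h₁ h₂
  rw [F.atom_eq ω a ha]
  intros
  rfl

end FinPartition

section Barycentric

variable {Ω X : Type*} [Fintype Ω] {bary : FinProb X → X} {μ : Ω → ℝ} (hμ : ∀ ω, 0 < μ ω)
  (F : FinPartition Ω)

theorem condBary_eq_of_mem_atom (W : Ω → X) {a ω : Ω} (ha : a ∈ F.atom ω) :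
    condBary bary μ hμ F W a = condBary bary μ hμ F W ω :=
  congrArg bary (F.condLaw_eq_of_mem_atom hμ W ha)

variable [MetricSpace X] {p K : ℝ}

theorem IsPBarycentric.condBary_le (hP : IsPBarycentric p K bary) (x : X) (W : Ω → X) (ω : Ω) :
    dist (condBary bary μ hμ F W ω) x ^ p +
        K ^ (-p) * F.condExp μ (fun a => dist (W a) (condBary bary μ hμ F W a) ^ p) ω ≤
      F.condExp μ (fun a => dist (W a) x ^ p) ω := by
  have h := hP x (F.condLaw μ hμ W ω)
  rw [← F.condBary_eq_bary_condLaw hμ W bary ω, F.exp_condLaw, F.exp_condLaw] at h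
  have hY : F.condExp μ (fun a => dist (W a) (condBary bary μ hμ F W a) ^ p) ω =
      F.condExp μ ((fun y => dist (condBary bary μ hμ F W ω) y ^ p) ∘ W) ω :=
    F.condExp_congr fun a ha => by
      rw [Function.comp_apply, condBary_eq_of_mem_atom hμ F W ha, dist_comm]
  rw [hY]
  simpa only [Function.comp_def, dist_comm x] using h

theorem IsPBarycentric.sum_condBary_le (hP : IsPBarycentric p K bary) (x : X) (W : Ω → X) :
    ∑ ω, μ ω * dist (condBary bary μ hμ F W ω) x ^ p +
        K ^ (-p) * ∑ ω, μ ω * dist (W ω) (condBary bary μ hμ F W ω) ^ p ≤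
      ∑ ω, μ ω * dist (W ω) x ^ p := by
  set Y := condBary bary μ hμ F W
  calc ∑ ω, μ ω * dist (Y ω) x ^ p + K ^ (-p) * ∑ ω, μ ω * dist (W ω) (Y ω) ^ p
      = ∑ ω, μ ω * (dist (Y ω) x ^ p +
          K ^ (-p) * F.condExp μ (fun a => dist (W a) (Y a) ^ p) ω) := by
        rw [← F.sum_mul_condExp hμ fun a => dist (W a) (Y a) ^ p, Finset.mul_sum,
          ← Finset.sum_add_distrib]
        exact Finset.sum_congr rfl fun ω _ => by ring
    _ ≤ ∑ ω, μ ω * F.condExp μ (fun a => dist (W a) x ^ p) ω :=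
        Finset.sum_le_sum fun ω _ =>
          mul_le_mul_of_nonneg_left (hP.condBary_le hμ F x W ω) (hμ ω).le
    _ = ∑ ω, μ ω * dist (W ω) x ^ p := F.sum_mul_condExp hμ _

end Barycentric

theorem add_sum_range_le_of_add_le {m : ℕ} {a b : ℕ → ℝ} (h : ∀ t < m, a t + b t ≤ a (t + 1)) :
    a 0 + ∑ t ∈ Finset.range m, b t ≤ a m := by
  induction m with
  | zero => simp
  | succ m ih =>
    rw [Finset.sum_range_succ, ← add_assoc]
    linarith [ih fun t ht => h t (ht.trans m.lt_succ_self), h m m.lt_succ_self]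

theorem statement8_general (m : ℕ) (p K : ℝ) (hK : 1 ≤ K)
    (X : Type*) [MetricSpace X] (bary : FinProb X → X)
    (hP : IsPBarycentric p K bary)
    (Ω : Type*) [Fintype Ω] (μ : Ω → ℝ) (hμ : ∀ ω, 0 < μ ω)
    (F : ℕ → FinPartition Ω)
    (Z : ℕ → Ω → X)
    (hmart : ∀ i < m, condBary bary μ hμ (F i) (Z (i + 1)) = Z i)
    (z : X) :
    K ^ p * ∑ ω, μ ω * dist (Z 0 ω) z ^ p +
      ∑ t ∈ Finset.range m, ∑ ω, μ ω * dist (Z (t + 1) ω) (Z t ω) ^ p ≤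
    K ^ p * ∑ ω, μ ω * dist (Z m ω) z ^ p := by
  have hKp : K ^ p * K ^ (-p) = 1 := by
    rw [← Real.rpow_add (by linarith)]
    simp
  refine add_sum_range_le_of_add_le
    (a := fun t => K ^ p * ∑ ω, μ ω * dist (Z t ω) z ^ p) fun t ht => ?_
  have h := hP.sum_condBary_le hμ (F t) z (Z (t + 1))
  rw [hmart t ht] at h
  calc K ^ p * ∑ ω, μ ω * dist (Z t ω) z ^ p + ∑ ω, μ ω * dist (Z (t + 1) ω) (Z t ω) ^ p
      = K ^ p * (∑ ω, μ ω * dist (Z t ω) z ^ p +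
          K ^ (-p) * ∑ ω, μ ω * dist (Z (t + 1) ω) (Z t ω) ^ p) := by
        rw [mul_add, ← mul_assoc, hKp, one_mul]
    _ ≤ K ^ p * ∑ ω, μ ω * dist (Z (t + 1) ω) z ^ p := by
        gcongr

theorem statement8 (m : ℕ) (p K : ℝ) (hp : 1 ≤ p) (hK : 1 ≤ K)
    (X : Type*) [MetricSpace X] (bary : FinProb X → X)
    (hBary : IsBarycenterMap bary) (hP : IsPBarycentric p K bary)
    (Ω : Type*) [Fintype Ω] (μ : Ω → ℝ) (hμ : ∀ ω, 0 < μ ω) (hμ1 : ∑ ω, μ ω = 1)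
    (F : ℕ → FinPartition Ω)
    (hF0 : ∀ ω, (F 0).atom ω = Finset.univ)
    (hFmono : ∀ i < m, ∀ ω, (F (i + 1)).atom ω ⊆ (F i).atom ω)
    (Z : ℕ → Ω → X)
    (hmart : ∀ i < m, condBary bary μ hμ (F i) (Z (i + 1)) = Z i)
    (z : X) :
    K ^ p * ∑ ω, μ ω * dist (Z 0 ω) z ^ p +
      ∑ t ∈ Finset.range m, ∑ ω, μ ω * dist (Z (t + 1) ω) (Z t ω) ^ p ≤
    K ^ p * ∑ ω, μ ω * dist (Z m ω) z ^ p :=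
  statement8_general m p K hK X bary hP Ω μ hμ F Z hmart z
end
end

section
/- Fix p ∈ [1,∞) and n,t ∈ ℕ. Suppose A ∈ M_n(ℝ) is a stochastic matrix that is reversible relative to a probability vector π ∈ Δ^{n-1}. Then for every metric space (X,d_X) and every x_1,…,x_n ∈ X: Σ_{i,j} π_i (A^t)_{ij} d_X(x_i,x_j)^p ≤ 2^p Σ_{i,j} π_i 𝒜_t(A)_{ij} d_X(x_i,x_j)^p. -/
open scoped BigOperators ENNReal
open scoped Classical

noncomputable section

/-!
Write `E s = ∑ i j, π i (A ^ s) i j d(x i, x j) ^ p`. As `π` is stationary, the chain started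
from `π` is again `π`-distributed after `s` steps, so the triangle inequality through that
intermediate point and convexity of `r ↦ r ^ p` give `E t ≤ 2 ^ (p - 1) (E s + E (t - s))`
for `s ≤ t`. Summing over `s = 0, …, t`, where `E (t - s)` runs through the same values as `E s`,
and using `E 0 = 0` yields `(t + 1) E t ≤ 2 ^ p ∑_{s=1}^t E s`.
-/

open Finset Matrix

lemma isStochastic_iff_mem_rowStochastic {n : ℕ} {A : Matrix (Fin n) (Fin n) ℝ} :
    IsStochastic A ↔ A ∈ rowStochastic ℝ (Fin n) :=
  mem_rowStochastic_iff_sum.symm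

lemma IsStochastic.pow {n : ℕ} {A : Matrix (Fin n) (Fin n) ℝ} (hA : IsStochastic A) (s : ℕ) :
    IsStochastic (A ^ s) :=
  isStochastic_iff_mem_rowStochastic.2 <| pow_mem (isStochastic_iff_mem_rowStochastic.1 hA) s

lemma IsReversible.vecMul_eq {n : ℕ} {A : Matrix (Fin n) (Fin n) ℝ} {π : Fin n → ℝ}
    (hrev : IsReversible A π) (hA : IsStochastic A) : π ᵥ* A = π := by
  ext k
  simp only [vecMul, dotProduct, hrev _ k, ← mul_sum, hA.2 k, mul_one]

lemma vecMul_pow_eq_of_vecMul_eq {n : ℕ} {A : Matrix (Fin n) (Fin n) ℝ} {π : Fin n → ℝ}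
    (hπ : π ᵥ* A = π) (s : ℕ) : π ᵥ* A ^ s = π := by
  induction s with
  | zero => simp
  | succ s ih => rw [pow_succ, ← vecMul_vecMul, ih, hπ]

lemma rpow_le_two_rpow_mul_add {a b c p : ℝ} (ha : 0 ≤ a) (hb : 0 ≤ b) (hc : 0 ≤ c)
    (habc : a ≤ b + c) (hp : 1 ≤ p) : a ^ p ≤ 2 ^ (p - 1) * (b ^ p + c ^ p) :=
  calc a ^ p ≤ (b + c) ^ p := Real.rpow_le_rpow ha habc (zero_le_one.trans hp)
    _ ≤ 2 ^ (p - 1) * (b ^ p + c ^ p) := by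
      exact_mod_cast NNReal.rpow_add_le_mul_rpow_add_rpow ⟨b, hb⟩ ⟨c, hc⟩ hp

def expectedCost {n : ℕ} (π : Fin n → ℝ) (B : Matrix (Fin n) (Fin n) ℝ)
    (c : Fin n → Fin n → ℝ) : ℝ :=
  ∑ i, ∑ j, π i * B i j * c i j

section expectedCost

variable {n : ℕ} {π : Fin n → ℝ} {c : Fin n → Fin n → ℝ}

lemma expectedCost_nonneg {B : Matrix (Fin n) (Fin n) ℝ} (hπ : ∀ i, 0 ≤ π i)
    (hB : ∀ i j, 0 ≤ B i j) (hc : ∀ i j, 0 ≤ c i j) : 0 ≤ expectedCost π B c :=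
  sum_nonneg fun i _ => sum_nonneg fun j _ => mul_nonneg (mul_nonneg (hπ i) (hB i j)) (hc i j)

lemma expectedCost_one (hc : ∀ i, c i i = 0) : expectedCost π 1 c = 0 := by
  simp [expectedCost, one_apply, hc]

lemma expectedCost_smul_sum {ι : Type*} (r : ℝ) (S : Finset ι)
    (B : ι → Matrix (Fin n) (Fin n) ℝ) :
    expectedCost π (r • ∑ s ∈ S, B s) c = r * ∑ s ∈ S, expectedCost π (B s) c := by
  simp only [expectedCost, Matrix.smul_apply, Matrix.sum_apply, smul_eq_mul, mul_sum, sum_mul]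
  symm
  rw [sum_comm]
  refine sum_congr rfl fun i _ => ?_
  rw [sum_comm]
  exact sum_congr rfl fun j _ => sum_congr rfl fun s _ => by ring

lemma expectedCost_mul_le {K : ℝ} {B C : Matrix (Fin n) (Fin n) ℝ} (hπ : ∀ i, 0 ≤ π i)
    (hπB : π ᵥ* B = π) (hB : ∀ i j, 0 ≤ B i j) (hC : IsStochastic C)
    (hc : ∀ i j k, c i j ≤ K * (c i k + c k j)) :
    expectedCost π (B * C) c ≤ K * (expectedCost π B c + expectedCost π C c) := by
  have hfirst : ∑ i, ∑ k, ∑ j, π i * B i k * C k j * c i k = expectedCost π B c := by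
    refine sum_congr rfl fun i _ => sum_congr rfl fun k _ => ?_
    simp only [mul_right_comm _ (C k _), ← mul_sum, hC.2 k, mul_one]
  have hsecond : ∑ i, ∑ k, ∑ j, π i * B i k * C k j * c k j = expectedCost π C c := by
    rw [sum_comm]
    refine sum_congr rfl fun k _ => ?_
    rw [sum_comm]
    refine sum_congr rfl fun j _ => ?_
    rw [← congrFun hπB k]
    simp only [vecMul, dotProduct, sum_mul]
  calc expectedCost π (B * C) c = ∑ i, ∑ k, ∑ j, π i * B i k * C k j * c i j := by
        simp only [expectedCost, mul_apply, mul_sum, sum_mul]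
        refine sum_congr rfl fun i _ => ?_
        rw [sum_comm]
        exact sum_congr rfl fun k _ => sum_congr rfl fun j _ => by ring
    _ ≤ ∑ i, ∑ k, ∑ j, π i * B i k * C k j * (K * (c i k + c k j)) := by
        gcongr with i _ k _ j _
        · exact mul_nonneg (mul_nonneg (hπ i) (hB i k)) (hC.1 k j)
        · exact hc i j k
    _ = K * (expectedCost π B c + expectedCost π C c) := by
        simp only [← hfirst, ← hsecond, mul_sum, ← sum_add_distrib]
        exact sum_congr rfl fun i _ => sum_congr rfl fun k _ => sum_congr rfl fun j _ => by ring

end expectedCost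

lemma le_two_mul_average_of_le_add_sub {E : ℕ → ℝ} {K : ℝ} {t : ℕ} (hE0 : E 0 = 0)
    (hE : 0 ≤ E t) (hsplit : ∀ s ≤ t, E t ≤ K * (E s + E (t - s))) :
    E t ≤ 2 * K * ((t : ℝ)⁻¹ * ∑ s ∈ Icc 1 t, E s) := by
  rcases t.eq_zero_or_pos with rfl | ht
  · simp [hE0]
  have hrange : ∑ s ∈ range (t + 1), E s = ∑ s ∈ Icc 1 t, E s := by
    rw [range_eq_Ico, sum_eq_sum_Ico_succ_bot t.succ_pos, hE0, zero_add, zero_add,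
      Nat.succ_eq_add_one, Ico_add_one_right_eq_Icc]
  have hreflect : ∑ s ∈ range (t + 1), E (t - s) = ∑ s ∈ range (t + 1), E s := by
    simpa using sum_range_reflect E (t + 1)
  have hsum : ((t : ℝ) + 1) * E t ≤ 2 * K * ∑ s ∈ Icc 1 t, E s :=
    calc ((t : ℝ) + 1) * E t = ∑ s ∈ range (t + 1), E t := by simp
      _ ≤ ∑ s ∈ range (t + 1), K * (E s + E (t - s)) :=
        sum_le_sum fun s hs => hsplit s (Nat.lt_succ_iff.1 (mem_range.1 hs))
      _ = 2 * K * ∑ s ∈ Icc 1 t, E s := by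
        rw [← mul_sum, sum_add_distrib, hreflect, hrange]; ring
  have htpos : (0 : ℝ) < t := Nat.cast_pos.2 ht
  rw [← mul_assoc, mul_comm _ (t : ℝ)⁻¹, mul_assoc, le_inv_mul_iff₀ htpos]
  linarith

theorem statement9_general (p : ℝ) (hp : 1 ≤ p) (n t : ℕ)
    (A : Matrix (Fin n) (Fin n) ℝ) (π : Fin n → ℝ)
    (hA : IsStochastic A) (hπ : IsProbVec π) (hrev : IsReversible A π)
    (X : Type*) [MetricSpace X] (x : Fin n → X) :
    ∑ i, ∑ j, π i * (A ^ t) i j * dist (x i) (x j) ^ p ≤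
      (2 : ℝ) ^ p * ∑ i, ∑ j, π i * cesaro A t i j * dist (x i) (x j) ^ p := by
  set c : Fin n → Fin n → ℝ := fun i j => dist (x i) (x j) ^ p
  have hc : ∀ i j k, c i j ≤ 2 ^ (p - 1) * (c i k + c k j) := fun i j k =>
    rpow_le_two_rpow_mul_add dist_nonneg dist_nonneg dist_nonneg (dist_triangle _ _ _) hp
  have hsplit : ∀ s ≤ t, expectedCost π (A ^ t) c ≤
      2 ^ (p - 1) * (expectedCost π (A ^ s) c + expectedCost π (A ^ (t - s)) c) := by
    intro s hs
    rw [← Nat.add_sub_cancel' hs, pow_add, Nat.add_sub_cancel_left]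
    exact expectedCost_mul_le hπ.1 (vecMul_pow_eq_of_vecMul_eq (hrev.vecMul_eq hA) s)
      (hA.pow s).1 (hA.pow _) hc
  have hcesaro := le_two_mul_average_of_le_add_sub (E := fun s => expectedCost π (A ^ s) c)
    (by simp [expectedCost_one, c, Real.zero_rpow (by linarith : p ≠ 0)])
    (expectedCost_nonneg hπ.1 (hA.pow t).1 fun _ _ => by positivity) hsplit
  have htwo : (2 : ℝ) * 2 ^ (p - 1) = 2 ^ p := by
    rw [← Real.rpow_one_add' zero_le_two (by linarith), add_sub_cancel]
  show expectedCost π (A ^ t) c ≤ 2 ^ p * expectedCost π (cesaro A t) c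
  rwa [cesaro, expectedCost_smul_sum, ← htwo]

theorem statement9 (p : ℝ) (hp : 1 ≤ p) (n t : ℕ) (hn : 0 < n) (ht : 0 < t)
    (A : Matrix (Fin n) (Fin n) ℝ) (π : Fin n → ℝ)
    (hA : IsStochastic A) (hπ : IsProbVec π) (hrev : IsReversible A π)
    (X : Type*) [MetricSpace X] (x : Fin n → X) :
    ∑ i, ∑ j, π i * (A ^ t) i j * dist (x i) (x j) ^ p ≤
      (2 : ℝ) ^ p * ∑ i, ∑ j, π i * cesaro A t i j * dist (x i) (x j) ^ p :=
  statement9_general p hp n t A π hA hπ hrev X x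
end
end

section
/- Fix p, K, Γ ∈ [1,∞) and n,t ∈ ℕ. Suppose (X,d_X) is a metric space that is both W_p barycentric with constant Γ and p-barycentric with constant K (with respect to the same barycenter map B). Let A = (a_{ij}) ∈ M_n(ℝ) be a symmetric stochastic matrix with λ_p(A⊗I_X^n) < 1. Then γ₊(A^t, d_X^p) ≤ (Γ + 4(Γ+1)/(1 − λ_p(A⊗I_X^n)^{2t}))^p. -/
open scoped BigOperators ENNReal
open scoped Classical

noncomputable section

/-!
Write `T = A ⊗ I_X^n`, `λ = λ_p(T)`, `B(f)` for the barycenter of `f ∈ L_p^n(X)`, and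
`E^p = n⁻¹ ∑ᵢⱼ (A^t)ᵢⱼ d(xᵢ, yⱼ)^p`. Iterating the `p`-barycentric inequality (Jensen's inequality
for `B`) gives `d(x, T^{2t} x)^p ≤ n⁻¹ ∑ᵢₖ (A^{2t})ᵢₖ d(xᵢ, xₖ)^p`, and routing every step `i → k`
of `A^{2t} = A^t A^t` through `y` bounds this by `(2E)^p`. Since `T^{2t}` shrinks `d(·, B(·))` by
`λ^{2t}` and `W_p`-barycentricity moves `B` by at most `Γ d(x, T^{2t} x)`, we get
`(1 - λ^{2t}) d(x, B(x)) ≤ 2(1 + Γ)E`, and likewise for `y`. As `n⁻¹ A^t` couples the uniform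
measures on `x` and on `y`, also `d(B(x), B(y)) ≤ ΓE`; the triangle inequality through `B(x)` and
`B(y)` then bounds the mean of `d(xᵢ, yⱼ)^p`.
-/

lemma Real.add_rpow_le_two_rpow_mul {p a b : ℝ} (hp : 1 ≤ p) (ha : 0 ≤ a) (hb : 0 ≤ b) :
    (a + b) ^ p ≤ 2 ^ (p - 1) * (a ^ p + b ^ p) := by
  lift a to NNReal using ha
  lift b to NNReal using hb
  exact_mod_cast NNReal.rpow_add_le_mul_rpow_add_rpow a b hp

lemma weighted_Lp_add_le {ι : Type*} [Fintype ι] {p : ℝ} (hp : 1 ≤ p) {w : ℝ} (hw : 0 ≤ w)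
    {u v : ι → ℝ} (hu : ∀ i, 0 ≤ u i) (hv : ∀ i, 0 ≤ v i) :
    (w * ∑ i, (u i + v i) ^ p) ^ p⁻¹ ≤ (w * ∑ i, u i ^ p) ^ p⁻¹ + (w * ∑ i, v i ^ p) ^ p⁻¹ := by
  have hnn : ∀ f : ι → ℝ, (∀ i, 0 ≤ f i) → 0 ≤ ∑ i, f i ^ p :=
    fun f hf => Finset.sum_nonneg fun i _ => Real.rpow_nonneg (hf i) _
  rw [Real.mul_rpow hw (hnn _ fun i => add_nonneg (hu i) (hv i)), Real.mul_rpow hw (hnn u hu),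
    Real.mul_rpow hw (hnn v hv), ← mul_add]
  refine mul_le_mul_of_nonneg_left ?_ (Real.rpow_nonneg hw _)
  simpa only [one_div] using
    Real.Lp_add_le_of_nonneg Finset.univ hp (fun i _ => hu i) (fun i _ => hv i)

namespace FinProb

variable {ι X : Type*} [Fintype ι]

lemma sum_mix {M : Type*} [AddCommMonoid M] (w : ι → ℝ) (Z : ι → X) (hw : ∀ i, 0 ≤ w i)
    (h1 : ∑ i, w i = 1) (g : X → ℝ → M) (hg0 : ∀ x, g x 0 = 0)
    (hgadd : ∀ x r s, g x (r + s) = g x r + g x s) :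
    (mix w Z hw h1).w.sum g = ∑ i, g (Z i) (w i) := by
  rw [mix, ← Finsupp.sum_finsetSum_index hg0 hgadd]
  exact Finset.sum_congr rfl fun i _ => Finsupp.sum_single_index (hg0 _)

lemma exp_mix_s10 (w : ι → ℝ) (Z : ι → X) (hw : ∀ i, 0 ≤ w i) (h1 : ∑ i, w i = 1) (f : X → ℝ) :
    (mix w Z hw h1).exp f = ∑ i, w i * f (Z i) :=
  sum_mix w Z hw h1 _ (fun _ => zero_mul _) fun _ _ _ => add_mul _ _ _

lemma exp_nonneg (μ : FinProb X) {f : X → ℝ} (hf : ∀ x, 0 ≤ f x) : 0 ≤ μ.exp f :=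
  Finset.sum_nonneg fun x _ => mul_nonneg (μ.nonneg x) (hf x)

lemma mix_w_apply (w : ι → ℝ) (Z : ι → X) (hw : ∀ i, 0 ≤ w i) (h1 : ∑ i, w i = 1) (x : X) :
    (mix w Z hw h1).w x = ∑ i, if Z i = x then w i else 0 := by
  simp only [mix, Finsupp.finsetSum_apply, Finsupp.single_apply]

end FinProb

section Coupling

variable {ι κ X : Type*} [Fintype ι] [Fintype κ]

lemma isCoupling_mix (c : ι → κ → ℝ) (hc : ∀ i j, 0 ≤ c i j)
    (hc1 : ∑ q : ι × κ, c q.1 q.2 = 1) (x : ι → X) (y : κ → X)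
    (u : ι → ℝ) (hu : ∀ i, 0 ≤ u i) (hu1 : ∑ i, u i = 1)
    (v : κ → ℝ) (hv : ∀ j, 0 ≤ v j) (hv1 : ∑ j, v j = 1)
    (hrow : ∀ i, ∑ j, c i j = u i) (hcol : ∀ j, ∑ i, c i j = v j) :
    IsCoupling (FinProb.mix (fun q : ι × κ => c q.1 q.2) (fun q => (x q.1, y q.2))
      (fun q => hc q.1 q.2) hc1) (FinProb.mix u x hu hu1) (FinProb.mix v y hv hv1) := by
  constructor
  · intro z
    rw [FinProb.sum_mix _ _ _ _ _ (fun _ => by simp) fun _ _ _ => by split_ifs <;> simp,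
      FinProb.mix_w_apply, Fintype.sum_prod_type]
    refine Finset.sum_congr rfl fun i _ => ?_
    split_ifs <;> simp [hrow]
  · intro z
    rw [FinProb.sum_mix _ _ _ _ _ (fun _ => by simp) fun _ _ _ => by split_ifs <;> simp,
      FinProb.mix_w_apply, Fintype.sum_prod_type_right]
    refine Finset.sum_congr rfl fun j _ => ?_
    split_ifs <;> simp [hcol]

end Coupling

lemma IsStochastic.mem_doublyStochastic {n : ℕ} {A : Matrix (Fin n) (Fin n) ℝ}
    (hA : IsStochastic A) (hs : A.IsSymm) : A ∈ doublyStochastic ℝ (Fin n) :=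
  mem_doublyStochastic_iff_sum.2
    ⟨hA.1, hA.2, fun j => by simpa only [hs.apply] using hA.2 j⟩

section Transport

variable {X : Type*} [MetricSpace X] {p : ℝ} {n : ℕ}

/-- The cost `∑ᵢⱼ mᵢⱼ d(xᵢ, yⱼ)^p`; for doubly stochastic `M`, `n⁻¹ M` is a transport plan
between the uniform measures on the `xᵢ` and on the `yⱼ`. -/
def transportCost (p : ℝ) (M : Matrix (Fin n) (Fin n) ℝ) (x y : Fin n → X) : ℝ :=
  ∑ i, ∑ j, M i j * dist (x i) (y j) ^ p

def transportDist (p : ℝ) (M : Matrix (Fin n) (Fin n) ℝ) (x y : Fin n → X) : ℝ :=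
  ((n : ℝ)⁻¹ * transportCost p M x y) ^ p⁻¹

lemma transportCost_nonneg {M : Matrix (Fin n) (Fin n) ℝ} (hM : ∀ i j, 0 ≤ M i j)
    (x y : Fin n → X) : 0 ≤ transportCost p M x y :=
  Finset.sum_nonneg fun i _ => Finset.sum_nonneg fun j _ =>
    mul_nonneg (hM i j) (Real.rpow_nonneg dist_nonneg _)

lemma transportDist_nonneg {M : Matrix (Fin n) (Fin n) ℝ} (hM : ∀ i j, 0 ≤ M i j)
    (x y : Fin n → X) : 0 ≤ transportDist p M x y :=
  Real.rpow_nonneg (mul_nonneg (by positivity) (transportCost_nonneg hM x y)) _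

lemma transportDist_rpow (hp : p ≠ 0) {M : Matrix (Fin n) (Fin n) ℝ} (hM : ∀ i j, 0 ≤ M i j)
    (x y : Fin n → X) : transportDist p M x y ^ p = (n : ℝ)⁻¹ * transportCost p M x y :=
  Real.rpow_inv_rpow (mul_nonneg (by positivity) (transportCost_nonneg hM x y)) hp

lemma transportCost_comm_of_isSymm {M : Matrix (Fin n) (Fin n) ℝ} (hM : M.IsSymm)
    (x y : Fin n → X) : transportCost p M y x = transportCost p M x y := by
  rw [transportCost, Finset.sum_comm]
  simp only [hM.apply, dist_comm]
  rfl

lemma transportDist_comm_of_isSymm {M : Matrix (Fin n) (Fin n) ℝ} (hM : M.IsSymm)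
    (x y : Fin n → X) : transportDist p M y x = transportDist p M x y := by
  rw [transportDist, transportCost_comm_of_isSymm hM, transportDist]

lemma transportDist_one (x y : Fin n → X) : transportDist p 1 x y = dLpn p x y := by
  simp [transportDist, transportCost, dLpn, Matrix.one_apply]

lemma transportCost_mul_le (hp : 1 ≤ p) {M N : Matrix (Fin n) (Fin n) ℝ}
    (hM : M ∈ Matrix.colStochastic ℝ (Fin n)) (hN : N ∈ Matrix.rowStochastic ℝ (Fin n))
    (u v w : Fin n → X) :
    transportCost p (M * N) u w ≤
      2 ^ (p - 1) * (transportCost p M u v + transportCost p N v w) := by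
  have hMN : ∀ i l k, 0 ≤ M i l * N l k := fun i l k =>
    mul_nonneg (Matrix.nonneg_of_mem_colStochastic hM) (Matrix.nonneg_of_mem_rowStochastic hN)
  have hleft : ∑ i, ∑ k, ∑ l, M i l * N l k * dist (u i) (v l) ^ p = transportCost p M u v := by
    refine Finset.sum_congr rfl fun i _ => ?_
    rw [Finset.sum_comm]
    refine Finset.sum_congr rfl fun l _ => ?_
    rw [← Finset.sum_mul, ← Finset.mul_sum, Matrix.sum_row_of_mem_rowStochastic hN, mul_one]
  have hright : ∑ i, ∑ k, ∑ l, M i l * N l k * dist (v l) (w k) ^ p = transportCost p N v w := by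
    rw [Finset.sum_comm_cycle]
    refine Finset.sum_congr rfl fun l _ => ?_
    rw [Finset.sum_comm]
    refine Finset.sum_congr rfl fun k _ => ?_
    rw [← Finset.sum_mul, ← Finset.sum_mul, Matrix.sum_col_of_mem_colStochastic hM, one_mul]
  calc transportCost p (M * N) u w
      = ∑ i, ∑ k, ∑ l, M i l * N l k * dist (u i) (w k) ^ p := by
        simp only [transportCost, Matrix.mul_apply, Finset.sum_mul]
    _ ≤ ∑ i, ∑ k, ∑ l, M i l * N l k *
          (2 ^ (p - 1) * (dist (u i) (v l) ^ p + dist (v l) (w k) ^ p)) := by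
        gcongr with i _ k _ l _
        · exact hMN i l k
        · exact (Real.rpow_le_rpow dist_nonneg (dist_triangle _ _ _) (by linarith)).trans
            (Real.add_rpow_le_two_rpow_mul hp dist_nonneg dist_nonneg)
    _ = 2 ^ (p - 1) * (∑ i, ∑ k, ∑ l, M i l * N l k * dist (u i) (v l) ^ p +
          ∑ i, ∑ k, ∑ l, M i l * N l k * dist (v l) (w k) ^ p) := by
        simp only [mul_add, Finset.mul_sum, Finset.sum_add_distrib]
        congr 1 <;> simp only [mul_left_comm]
    _ = _ := by rw [hleft, hright]

end Transport

section LpDistances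

variable {X : Type*} [MetricSpace X] {p : ℝ} {n : ℕ}

lemma dLpn_nonneg (f g : Fin n → X) : 0 ≤ dLpn p f g :=
  Real.rpow_nonneg (mul_nonneg (by positivity)
    (Finset.sum_nonneg fun _ _ => Real.rpow_nonneg dist_nonneg _)) _

lemma dLpn_rpow (hp : p ≠ 0) (f g : Fin n → X) :
    dLpn p f g ^ p = (n : ℝ)⁻¹ * ∑ i, dist (f i) (g i) ^ p :=
  Real.rpow_inv_rpow (mul_nonneg (by positivity)
    (Finset.sum_nonneg fun _ _ => Real.rpow_nonneg dist_nonneg _)) hp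

lemma dLpn_comm (f g : Fin n → X) : dLpn p f g = dLpn p g f := by
  simp only [dLpn, dist_comm]

lemma dLpn_const_const (hp : p ≠ 0) (hn : 0 < n) (a b : X) :
    dLpn p (fun _ : Fin n => a) (fun _ => b) = dist a b := by
  rw [dLpn, Finset.sum_const, Finset.card_univ, Fintype.card_fin, nsmul_eq_mul,
    inv_mul_cancel_left₀ (by positivity)]
  exact Real.rpow_rpow_inv dist_nonneg hp

lemma dLpn_triangle (hp : 1 ≤ p) (f g h : Fin n → X) :
    dLpn p f h ≤ dLpn p f g + dLpn p g h := by
  refine le_trans ?_ (weighted_Lp_add_le hp (by positivity : (0 : ℝ) ≤ (n : ℝ)⁻¹)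
    (fun i => dist_nonneg (x := f i) (y := g i)) fun i => dist_nonneg (x := g i) (y := h i))
  unfold dLpn
  gcongr with i
  exact dist_triangle _ _ _

end LpDistances

section Barycentric

variable {X : Type*} [MetricSpace X] {p : ℝ} {n : ℕ} {bary : FinProb X → X}

lemma wassersteinDist_le_of_isCoupling {π : FinProb (X × X)} {μ ν : FinProb X}
    (hπ : IsCoupling π μ ν) :
    wassersteinDist p μ ν ≤ (π.exp fun q => dist q.1 q.2 ^ p) ^ p⁻¹ := by
  refine csInf_le ⟨0, ?_⟩ ⟨π, hπ, rfl⟩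
  rintro _ ⟨π', -, rfl⟩
  exact Real.rpow_nonneg (π'.exp_nonneg fun _ => Real.rpow_nonneg dist_nonneg _) _

lemma IsWBarycentric.dist_baryFun_le {Γ : ℝ} (hW : IsWBarycentric p Γ bary) (hΓ : 0 ≤ Γ)
    (hn : 0 < n) {M : Matrix (Fin n) (Fin n) ℝ} (hM : M ∈ doublyStochastic ℝ (Fin n))
    (x y : Fin n → X) :
    dist (baryFun bary hn x) (baryFun bary hn y) ≤ Γ * transportDist p M x y := by
  have hunif : ∀ i : Fin n, ∑ j : Fin n, (n : ℝ)⁻¹ * M i j = 1 / ∑ _j : Fin n, (1 : ℝ) := by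
    intro i
    simp [← Finset.mul_sum, sum_row_of_mem_doublyStochastic hM]
  have hunif' : ∀ j : Fin n, ∑ i : Fin n, (n : ℝ)⁻¹ * M i j = 1 / ∑ _j : Fin n, (1 : ℝ) := by
    intro j
    simp [← Finset.mul_sum, sum_col_of_mem_doublyStochastic hM]
  have hc1 : ∑ q : Fin n × Fin n, (n : ℝ)⁻¹ * M q.1 q.2 = 1 := by
    rw [Fintype.sum_prod_type, Finset.sum_congr rfl fun i _ => hunif i]
    simp [hn.ne']
  refine (hW.2 _ _).trans (mul_le_mul_of_nonneg_left ?_ hΓ)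
  refine (wassersteinDist_le_of_isCoupling (isCoupling_mix (fun i j => (n : ℝ)⁻¹ * M i j)
    (fun i j => mul_nonneg (by positivity) (nonneg_of_mem_doublyStochastic hM)) hc1 x y
    _ _ _ _ _ _ hunif hunif')).trans_eq ?_
  rw [FinProb.exp_mix_s10, Fintype.sum_prod_type, transportDist, transportCost, Finset.mul_sum]
  simp only [Finset.mul_sum, mul_assoc]

lemma IsWBarycentric.dist_baryFun_le_dLpn {Γ : ℝ} (hW : IsWBarycentric p Γ bary) (hΓ : 0 ≤ Γ)
    (hn : 0 < n) (x y : Fin n → X) :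
    dist (baryFun bary hn x) (baryFun bary hn y) ≤ Γ * dLpn p x y := by
  simpa only [transportDist_one] using hW.dist_baryFun_le hΓ hn (one_mem _) x y

lemma IsPBarycentric.dist_rpow_le {K : ℝ} (hP : IsPBarycentric p K bary) (hK : 0 ≤ K)
    {ι : Type*} [Fintype ι] (w : ι → ℝ) (Z : ι → X) (hw : ∀ i, 0 ≤ w i) (h1 : ∑ i, w i = 1)
    (x : X) : dist x (bary (FinProb.mix w Z hw h1)) ^ p ≤ ∑ i, w i * dist x (Z i) ^ p := by
  rw [← FinProb.exp_mix_s10 w Z hw h1 fun y => dist x y ^ p]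
  exact le_of_add_le_of_nonneg_left (hP x _) (mul_nonneg (Real.rpow_nonneg hK _)
    (FinProb.exp_nonneg _ fun _ => Real.rpow_nonneg dist_nonneg _))

lemma IsPBarycentric.dist_matAct_iterate_rpow_le {K : ℝ} (hP : IsPBarycentric p K bary)
    (hK : 0 ≤ K) {A : Matrix (Fin n) (Fin n) ℝ} (hA : IsStochastic A) (z : X) (x : Fin n → X)
    (s : ℕ) (j : Fin n) :
    dist z ((matAct bary A hA)^[s] x j) ^ p ≤ ∑ k, (A ^ s) j k * dist z (x k) ^ p := by
  induction s generalizing j with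
  | zero => simp [Matrix.one_apply]
  | succ s ih =>
    rw [Function.iterate_succ_apply']
    refine (hP.dist_rpow_le hK _ _ _ _ z).trans ?_
    calc ∑ l, A j l * dist z ((matAct bary A hA)^[s] x l) ^ p
        ≤ ∑ l, A j l * ∑ k, (A ^ s) l k * dist z (x k) ^ p := by
          gcongr with l
          · exact hA.1 j l
          · exact ih l
      _ = ∑ k, (A ^ (s + 1)) j k * dist z (x k) ^ p := by
          simp only [pow_succ', Matrix.mul_apply, Finset.mul_sum, Finset.sum_mul, mul_assoc]
          exact Finset.sum_comm

lemma IsPBarycentric.dLpn_matAct_iterate_rpow_le {K : ℝ} (hP : IsPBarycentric p K bary)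
    (hK : 0 ≤ K) (hp : p ≠ 0) {A : Matrix (Fin n) (Fin n) ℝ} (hA : IsStochastic A)
    (x : Fin n → X) (s : ℕ) :
    dLpn p x ((matAct bary A hA)^[s] x) ^ p ≤ (n : ℝ)⁻¹ * transportCost p (A ^ s) x x := by
  rw [dLpn_rpow hp, transportCost]
  gcongr with i
  exact hP.dist_matAct_iterate_rpow_le hK hA (x i) x s i

end Barycentric

section SpectralGap

variable {X : Type*} [MetricSpace X] {p : ℝ} {n : ℕ} {bary : FinProb X → X}

lemma IsPBarycentric.dLpn_matAct_iterate_two_mul_le {K : ℝ} (hP : IsPBarycentric p K bary)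
    (hK : 0 ≤ K) (hp : 1 ≤ p) {A : Matrix (Fin n) (Fin n) ℝ} (hA : IsStochastic A)
    (hs : A.IsSymm) (t : ℕ) (x y : Fin n → X) :
    dLpn p x ((matAct bary A hA)^[2 * t] x) ≤ 2 * transportDist p (A ^ t) x y := by
  have hp0 : 0 < p := by linarith
  have hAt : A ^ t ∈ doublyStochastic ℝ (Fin n) := pow_mem (hA.mem_doublyStochastic hs) t
  obtain ⟨hrow, hcol⟩ :=
    mem_doublyStochastic_iff_mem_rowStochastic_and_mem_colStochastic.1 hAt
  have hAt0 : ∀ i j, 0 ≤ (A ^ t) i j := fun _ _ => nonneg_of_mem_doublyStochastic hAt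
  rw [← Real.rpow_le_rpow_iff (dLpn_nonneg _ _)
    (mul_nonneg zero_le_two (transportDist_nonneg hAt0 x y)) hp0]
  calc dLpn p x ((matAct bary A hA)^[2 * t] x) ^ p
      ≤ (n : ℝ)⁻¹ * transportCost p (A ^ (2 * t)) x x :=
        hP.dLpn_matAct_iterate_rpow_le hK hp0.ne' hA x _
    _ ≤ (n : ℝ)⁻¹ * (2 ^ (p - 1) * (transportCost p (A ^ t) x y +
          transportCost p (A ^ t) y x)) := by
        rw [two_mul, pow_add]
        gcongr
        exact transportCost_mul_le hp hcol hrow x y x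
    _ = 2 ^ p * ((n : ℝ)⁻¹ * transportCost p (A ^ t) x y) := by
        rw [transportCost_comm_of_isSymm (hs.pow t), Real.rpow_sub_one two_ne_zero]
        ring
    _ = (2 * transportDist p (A ^ t) x y) ^ p := by
        rw [Real.mul_rpow zero_le_two (transportDist_nonneg hAt0 x y),
          transportDist_rpow hp0.ne' hAt0]

def distBary (p : ℝ) (bary : FinProb X → X) (hn : 0 < n) (f : Fin n → X) : ℝ :=
  dLpn p f fun _ => baryFun bary hn f

lemma distBary_nonneg (hn : 0 < n) (f : Fin n → X) : 0 ≤ distBary p bary hn f :=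
  dLpn_nonneg _ _

lemma distBary_le_lambdaP_mul {hn : 0 < n} {T : (Fin n → X) → Fin n → X}
    (hT : lambdaP p hn bary T ≠ ⊤) (f : Fin n → X) :
    distBary p bary hn (T f) ≤ (lambdaP p hn bary T).toReal * distBary p bary hn f := by
  obtain ⟨l₀, hl₀⟩ : Set.Nonempty {l : ℝ≥0∞ | ∀ f : Fin n → X,
      ENNReal.ofReal (distBary p bary hn (T f)) ≤ l * ENNReal.ofReal (distBary p bary hn f)} :=
    Set.nonempty_iff_ne_empty.2 fun h => hT (by rw [lambdaP]; exact h ▸ sInf_empty)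
  have hle : ENNReal.ofReal (distBary p bary hn (T f)) ≤
      lambdaP p hn bary T * ENNReal.ofReal (distBary p bary hn f) := by
    rw [lambdaP, sInf_eq_iInf', ENNReal.iInf_mul' (by simp) fun _ => ⟨⟨l₀, hl₀⟩⟩]
    exact le_iInf fun l => l.2 f
  rwa [← ENNReal.ofReal_toReal hT, ← ENNReal.ofReal_mul ENNReal.toReal_nonneg,
    ENNReal.ofReal_le_ofReal_iff (mul_nonneg ENNReal.toReal_nonneg (distBary_nonneg hn f))] at hle

lemma distBary_iterate_le {hn : 0 < n} {T : (Fin n → X) → Fin n → X}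
    (hT : lambdaP p hn bary T ≠ ⊤) (s : ℕ) (f : Fin n → X) :
    distBary p bary hn (T^[s] f) ≤ (lambdaP p hn bary T).toReal ^ s * distBary p bary hn f := by
  induction s with
  | zero => simp
  | succ s ih =>
    rw [Function.iterate_succ_apply', pow_succ', mul_assoc]
    exact (distBary_le_lambdaP_mul hT _).trans
      (mul_le_mul_of_nonneg_left ih ENNReal.toReal_nonneg)

lemma IsWBarycentric.distBary_le {Γ : ℝ} (hW : IsWBarycentric p Γ bary) (hΓ : 0 ≤ Γ)
    (hp : 1 ≤ p) (hn : 0 < n) (f g : Fin n → X) :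
    distBary p bary hn f ≤ (1 + Γ) * dLpn p f g + distBary p bary hn g := by
  have hB : dist (baryFun bary hn g) (baryFun bary hn f) ≤ Γ * dLpn p f g :=
    dLpn_comm (p := p) f g ▸ hW.dist_baryFun_le_dLpn hΓ hn g f
  calc distBary p bary hn f
      ≤ dLpn p f g + (distBary p bary hn g +
          dLpn p (fun _ => baryFun bary hn g) fun _ => baryFun bary hn f) :=
        (dLpn_triangle hp _ g _).trans (by gcongr; exact dLpn_triangle hp _ _ _)
    _ = dLpn p f g + (distBary p bary hn g + dist (baryFun bary hn g) (baryFun bary hn f)) := by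
        rw [dLpn_const_const (by linarith) hn]
    _ ≤ (1 + Γ) * dLpn p f g + distBary p bary hn g := by linarith

lemma one_sub_mul_distBary_le {Γ K : ℝ} (hW : IsWBarycentric p Γ bary) (hΓ : 0 ≤ Γ)
    (hP : IsPBarycentric p K bary) (hK : 0 ≤ K) (hp : 1 ≤ p) (hn : 0 < n)
    {A : Matrix (Fin n) (Fin n) ℝ} (hA : IsStochastic A) (hs : A.IsSymm)
    (hT : lambdaP p hn bary (matAct bary A hA) ≠ ⊤) (t : ℕ) (x y : Fin n → X) :
    (1 - (lambdaP p hn bary (matAct bary A hA)).toReal ^ (2 * t)) * distBary p bary hn x ≤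
      2 * (1 + Γ) * transportDist p (A ^ t) x y := by
  have hsplit := hW.distBary_le hΓ hp hn x ((matAct bary A hA)^[2 * t] x)
  have hcontract := distBary_iterate_le hT (2 * t) x
  have hmix := mul_le_mul_of_nonneg_left
    (hP.dLpn_matAct_iterate_two_mul_le hK hp hA hs t x y) (by linarith : 0 ≤ 1 + Γ)
  linarith

lemma mean_dist_rpow_le (hp : 1 ≤ p) (hn : 0 < n) (x y : Fin n → X) (a b : X) :
    (((n : ℝ) ^ 2)⁻¹ * ∑ i, ∑ j, dist (x i) (y j) ^ p) ^ p⁻¹ ≤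
      dLpn p x (fun _ => a) + dist a b + dLpn p y (fun _ => b) := by
  have hw : (0 : ℝ) ≤ ((n : ℝ) ^ 2)⁻¹ := by positivity
  have hfst : ∀ g : Fin n → ℝ,
      ((n : ℝ) ^ 2)⁻¹ * ∑ q : Fin n × Fin n, g q.1 = (n : ℝ)⁻¹ * ∑ i, g i := by
    intro g
    rw [Fintype.sum_prod_type]
    simp only [Finset.sum_const, Finset.card_univ, Fintype.card_fin, nsmul_eq_mul,
      ← Finset.mul_sum]
    field_simp
  have hsnd : ∀ g : Fin n → ℝ,
      ((n : ℝ) ^ 2)⁻¹ * ∑ q : Fin n × Fin n, g q.2 = (n : ℝ)⁻¹ * ∑ i, g i := by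
    intro g
    rw [← hfst, ← Equiv.sum_comp (Equiv.prodComm _ _)]
    rfl
  calc (((n : ℝ) ^ 2)⁻¹ * ∑ i, ∑ j, dist (x i) (y j) ^ p) ^ p⁻¹
      ≤ (((n : ℝ) ^ 2)⁻¹ * ∑ q : Fin n × Fin n,
          (dist (x q.1) a + dist a b + dist (y q.2) b) ^ p) ^ p⁻¹ := by
        rw [← Fintype.sum_prod_type']
        gcongr with q
        rw [dist_comm (y q.2)]
        exact dist_triangle4 _ _ _ _
    _ ≤ (((n : ℝ) ^ 2)⁻¹ * ∑ q : Fin n × Fin n, (dist (x q.1) a + dist a b) ^ p) ^ p⁻¹ +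
          (((n : ℝ) ^ 2)⁻¹ * ∑ q : Fin n × Fin n, dist (y q.2) b ^ p) ^ p⁻¹ :=
        weighted_Lp_add_le hp hw (fun _ => by positivity) fun _ => dist_nonneg
    _ ≤ (((n : ℝ) ^ 2)⁻¹ * ∑ q : Fin n × Fin n, dist (x q.1) a ^ p) ^ p⁻¹ +
          (((n : ℝ) ^ 2)⁻¹ * ∑ _q : Fin n × Fin n, dist a b ^ p) ^ p⁻¹ +
          (((n : ℝ) ^ 2)⁻¹ * ∑ q : Fin n × Fin n, dist (y q.2) b ^ p) ^ p⁻¹ := by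
        gcongr
        exact weighted_Lp_add_le hp hw (fun _ => dist_nonneg) fun _ => dist_nonneg
    _ = dLpn p x (fun _ => a) + dist a b + dLpn p y (fun _ => b) := by
        have hab : (((n : ℝ) ^ 2)⁻¹ * ∑ _q : Fin n × Fin n, dist a b ^ p) ^ p⁻¹ = dist a b := by
          rw [hfst fun _ => dist a b ^ p]
          exact dLpn_const_const (zero_lt_one.trans_le hp).ne' hn a b
        rw [hfst fun i => dist (x i) a ^ p, hab, hsnd fun j => dist (y j) b ^ p]
        rfl

lemma gammaPlus_le_ofReal_rpow (hp : 0 < p) (hn : 0 < n) {M : Matrix (Fin n) (Fin n) ℝ}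
    (hM : ∀ i j, 0 ≤ M i j) {C : ℝ} (hC : 0 ≤ C)
    (h : ∀ x y : Fin n → X, (((n : ℝ) ^ 2)⁻¹ * ∑ i, ∑ j, dist (x i) (y j) ^ p) ^ p⁻¹ ≤
      C * transportDist p M x y) :
    gammaPlus X M p ≤ ENNReal.ofReal (C ^ p) := by
  refine sInf_le fun x y => ?_
  have hmean : 0 ≤ ((n : ℝ) ^ 2)⁻¹ * ∑ i, ∑ j, dist (x i) (y j) ^ p :=
    mul_nonneg (by positivity) (Finset.sum_nonneg fun _ _ =>
      Finset.sum_nonneg fun _ _ => Real.rpow_nonneg dist_nonneg _)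
  have hreal : ((n : ℝ) ^ 2)⁻¹ * ∑ i, ∑ j, dist (x i) (y j) ^ p ≤
      C ^ p * ((n : ℝ)⁻¹ * transportCost p M x y) := by
    rw [← transportDist_rpow hp.ne' hM, ← Real.mul_rpow hC (transportDist_nonneg hM x y)]
    exact (Real.rpow_inv_le_iff_of_pos hmean (mul_nonneg hC (transportDist_nonneg hM x y)) hp).1
      (h x y)
  calc ENNReal.ofReal (((n : ℝ) ^ 2)⁻¹ * ∑ i, ∑ j, dist (x i) (y j) ^ p)
      ≤ ENNReal.ofReal (C ^ p * ((n : ℝ)⁻¹ * transportCost p M x y)) :=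
        ENNReal.ofReal_le_ofReal hreal
    _ = ENNReal.ofReal (C ^ p) / n * ENNReal.ofReal (transportCost p M x y) := by
        rw [ENNReal.ofReal_mul (Real.rpow_nonneg hC _), ENNReal.ofReal_mul (by positivity),
          ENNReal.ofReal_inv_of_pos (by positivity), ENNReal.ofReal_natCast, div_eq_mul_inv,
          mul_assoc]

end SpectralGap

theorem statement10 (p K Γ : ℝ) (hp : 1 ≤ p) (hK : 1 ≤ K) (hΓ : 1 ≤ Γ)
    (n t : ℕ) (hn : 0 < n) (ht : 0 < t)
    (X : Type*) [MetricSpace X] (bary : FinProb X → X)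
    (hW : IsWBarycentric p Γ bary) (hP : IsPBarycentric p K bary)
    (A : Matrix (Fin n) (Fin n) ℝ) (hA : IsStochastic A) (hsymm : A.IsSymm)
    (hl : lambdaP p hn bary (matAct bary A hA) < 1) :
    gammaPlus X (A ^ t) p ≤
      ENNReal.ofReal ((Γ + 4 * (Γ + 1) /
        (1 - (lambdaP p hn bary (matAct bary A hA)).toReal ^ (2 * t))) ^ p) := by
  set L := (lambdaP p hn bary (matAct bary A hA)).toReal
  have hT : lambdaP p hn bary (matAct bary A hA) ≠ ⊤ := hl.ne_top
  have hgap : 0 < 1 - L ^ (2 * t) := by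
    have hL : L < 1 := by simpa using (ENNReal.toReal_lt_toReal hT ENNReal.one_ne_top).2 hl
    linarith [pow_lt_one₀ ENNReal.toReal_nonneg hL (by omega : 2 * t ≠ 0)]
  have hAt := pow_mem (hA.mem_doublyStochastic hsymm) t
  refine gammaPlus_le_ofReal_rpow (by linarith) hn
    (fun _ _ => nonneg_of_mem_doublyStochastic hAt)
    (add_nonneg (by linarith) (div_nonneg (by linarith) hgap.le)) fun x y => ?_
  have hx := one_sub_mul_distBary_le hW (by linarith) hP (by linarith) hp hn hA hsymm hT t x y
  have hy := one_sub_mul_distBary_le hW (by linarith) hP (by linarith) hp hn hA hsymm hT t y x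
  rw [transportDist_comm_of_isSymm (hsymm.pow t)] at hy
  have hB := hW.dist_baryFun_le (by linarith) hn hAt x y
  have hxy : distBary p bary hn x + distBary p bary hn y ≤
      4 * (Γ + 1) * transportDist p (A ^ t) x y / (1 - L ^ (2 * t)) := by
    rw [le_div_iff₀ hgap]
    linarith
  calc _ ≤ distBary p bary hn x + dist (baryFun bary hn x) (baryFun bary hn y) +
        distBary p bary hn y := mean_dist_rpow_le hp hn x y _ _
    _ ≤ _ := by
        rw [add_mul, div_mul_eq_mul_div]
        linarith

end
end

section
/- Fix m,n ∈ ℕ and p ∈ [1,∞). Let B = (b_{ir}) be an n×m stochastic matrix and C = (c_{ij}) ∈ M_n(ℝ) a stochastic matrix, and fix a probability vector π ∈ Δ^{n-1} such that C is reversible relative to π. Then for every metric space (X,d_X) and every z_1,…,z_m ∈ X there exist w_1,…,w_n ∈ X such that max{ Σ_{i=1}^n Σ_{r=1}^m π_i b_{ir} d_X(w_i,z_r)^p , Σ_{i=1}^n Σ_{j=1}^n π_i c_{ij} d_X(w_i,w_j)^p } ≤ 3^p Σ_{r=1}^m Σ_{s=1}^m (Bᵀ D_π C B)_{rs} d_X(z_r,z_s)^p,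 where D_π ∈ M_n(ℝ) is the diagonal matrix whose diagonal entries are π_1,…,π_n. -/
open scoped BigOperators ENNReal
open scoped Classical

noncomputable section

/-!
Take `w i` to be a point `z r` minimizing the cost `∑ s, b_{is} d(z_r, z_s)^p` of the `i`-th row
of `B`. A minimum is at most an average, here against the `i`-th row of `CB`; summed against `π`
this bounds the first term by `T = ∑_{i,j} π_i c_{ij} ∑_{r,s} b_{ir} b_{js} d(z_r, z_s)^p`, which is
the right-hand side without the factor `3^p`. For the second term, route `d(w_i, w_j)` through
`z_r` and `z_s`, use `(a + b + c)^p ≤ 3^{p-1} (a^p + b^p + c^p)` and average over `b_{ir} b_{js}`: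
since reversibility makes `π` stationary for `C`, both end terms are again at most `T`.
-/

lemma dist_rpow_le_three_rpow_mul {X : Type*} [MetricSpace X] {p : ℝ} (hp : 1 ≤ p)
    (x u v y : X) :
    dist x y ^ p ≤ 3 ^ (p - 1) * (dist x u ^ p + dist u v ^ p + dist v y ^ p) := by
  have htri : dist x y ≤ dist x u + dist u v + dist v y :=
    (dist_triangle x u y).trans (by linarith [dist_triangle u v y])
  have hmean := Real.rpow_sum_le_const_mul_sum_rpow_of_nonneg (s := Finset.univ)
    (f := ![dist x u, dist u v, dist v y]) hp (fun i _ => by fin_cases i <;> exact dist_nonneg)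
  simp only [Fin.sum_univ_three, Matrix.cons_val_zero, Matrix.cons_val_one, Matrix.cons_val,
    Finset.card_univ, Fintype.card_fin] at hmean
  exact (Real.rpow_le_rpow dist_nonneg htri (by linarith)).trans hmean

lemma Matrix.sum_transpose_mul_diagonal_mul_mul_apply_mul {ι κ R : Type*} [Fintype ι]
    [Fintype κ] [DecidableEq ι] [CommSemiring R] (B : Matrix ι κ R) (C : Matrix ι ι R)
    (π : ι → R) (K : κ → κ → R) :
    ∑ r, ∑ s, (B.transpose * Matrix.diagonal π * C * B) r s * K r s =
      ∑ i, ∑ j, π i * C i j * ∑ r, ∑ s, B i r * B j s * K r s := by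
  have entry : ∀ r s, (B.transpose * Matrix.diagonal π * C * B) r s * K r s =
      ∑ i, ∑ j, π i * C i j * (B i r * B j s * K r s) := by
    intro r s
    simp only [Matrix.mul_apply, Matrix.diagonal_apply, Matrix.transpose_apply, mul_ite,
      mul_zero, Finset.sum_ite_eq', Finset.mem_univ, if_true, Finset.sum_mul]
    rw [Finset.sum_comm]
    exact Finset.sum_congr rfl fun i _ => Finset.sum_congr rfl fun j _ => by ring
  set F : κ × κ → ι × ι → R := fun x y => π y.1 * C y.1 y.2 * (B y.1 x.1 * B y.2 x.2 * K x.1 x.2)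
  calc _ = ∑ x, ∑ y, F x y := by simp only [entry, F, Fintype.sum_prod_type]
    _ = ∑ y, ∑ x, F x y := Finset.sum_comm
    _ = _ := by simp only [F, Fintype.sum_prod_type, Finset.mul_sum]

namespace IsStochastic

variable {n m : ℕ} {A : Matrix (Fin n) (Fin m) ℝ}

lemma sum_mul_const (hA : IsStochastic A) (i : Fin n) (c : ℝ) : ∑ j, A i j * c = c := by
  rw [← Finset.sum_mul, hA.2 i, one_mul]

lemma le_sum_mul (hA : IsStochastic A) (i : Fin n) {c : ℝ} {f : Fin m → ℝ}
    (h : ∀ j, c ≤ f j) : c ≤ ∑ j, A i j * f j :=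
  (hA.sum_mul_const i c).ge.trans
    (Finset.sum_le_sum fun j _ => mul_le_mul_of_nonneg_left (h j) (hA.1 i j))

lemma nonempty (hA : IsStochastic A) (i : Fin n) : Nonempty (Fin m) := by
  by_contra h
  rw [not_nonempty_iff] at h
  simpa using hA.2 i

lemma sum_sum_mul_mul_add_add (hA : IsStochastic A) (i j : Fin n) (f h : Fin m → ℝ)
    (g : Fin m → Fin m → ℝ) :
    ∑ r, ∑ s, A i r * A j s * (f r + g r s + h s) =
      ∑ r, A i r * f r + ∑ r, ∑ s, A i r * A j s * g r s + ∑ s, A j s * h s := by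
  have hf : ∀ r, ∑ s, A i r * A j s * f r = A i r * f r := fun r => by
    rw [← hA.sum_mul_const j (A i r * f r)]
    exact Finset.sum_congr rfl fun s _ => by ring
  have hh : ∑ r, ∑ s, A i r * A j s * h s = ∑ s, A j s * h s := by
    rw [Finset.sum_comm]
    refine Finset.sum_congr rfl fun s _ => ?_
    rw [← hA.sum_mul_const i (A j s * h s)]
    exact Finset.sum_congr rfl fun r _ => by ring
  simp only [mul_add, Finset.sum_add_distrib, hf, hh]

end IsStochastic

lemma IsReversible.sum_mul_apply {n : ℕ} {C : Matrix (Fin n) (Fin n) ℝ} {π : Fin n → ℝ}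
    (hrev : IsReversible C π) (hC : IsStochastic C) (j : Fin n) : ∑ i, π i * C i j = π j := by
  simp only [hrev _ j, ← Finset.mul_sum, hC.2 j, mul_one]

lemma IsReversible.sum_sum_mul_add_add {n : ℕ} {C : Matrix (Fin n) (Fin n) ℝ} {π : Fin n → ℝ}
    (hrev : IsReversible C π) (hC : IsStochastic C) (a : Fin n → ℝ) (P : Fin n → Fin n → ℝ) :
    ∑ i, ∑ j, π i * C i j * (a i + P i j + a j) =
      2 * ∑ i, π i * a i + ∑ i, ∑ j, π i * C i j * P i j := by
  have ha : ∑ i, ∑ j, π i * C i j * a i = ∑ i, π i * a i :=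
    Finset.sum_congr rfl fun i _ => by
      rw [← hC.sum_mul_const i (π i * a i)]
      exact Finset.sum_congr rfl fun j _ => by ring
  have ha' : ∑ i, ∑ j, π i * C i j * a j = ∑ j, π j * a j := by
    rw [Finset.sum_comm]
    exact Finset.sum_congr rfl fun j _ => by rw [← Finset.sum_mul, hrev.sum_mul_apply hC j]
  simp only [mul_add, Finset.sum_add_distrib, ha, ha']
  ring

section

variable {m n : ℕ} {p : ℝ} {X : Type*} [MetricSpace X] {B : Matrix (Fin n) (Fin m) ℝ}
  {C : Matrix (Fin n) (Fin n) ℝ} {π : Fin n → ℝ} {z : Fin m → X}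

def rowCost (p : ℝ) (B : Matrix (Fin n) (Fin m) ℝ) (z : Fin m → X) (i : Fin n) (x : X) : ℝ :=
  ∑ r, B i r * dist x (z r) ^ p

def pairCost (p : ℝ) (B : Matrix (Fin n) (Fin m) ℝ) (z : Fin m → X) (i j : Fin n) : ℝ :=
  ∑ r, ∑ s, B i r * B j s * dist (z r) (z s) ^ p

lemma exists_rowCost_le (hB : IsStochastic B) (i : Fin n) :
    ∃ x, ∀ r, rowCost p B z i x ≤ rowCost p B z i (z r) := by
  have := hB.nonempty i
  obtain ⟨r, hr⟩ := Finite.exists_min fun r => rowCost p B z i (z r)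
  exact ⟨z r, hr⟩

lemma rowCost_le_sum_mul_pairCost (hB : IsStochastic B) (hC : IsStochastic C) {i : Fin n}
    {x : X} (hx : ∀ r, rowCost p B z i x ≤ rowCost p B z i (z r)) :
    rowCost p B z i x ≤ ∑ j, C i j * pairCost p B z i j := by
  refine hC.le_sum_mul i fun j => (hB.le_sum_mul j hx).trans_eq ?_
  simp only [rowCost, pairCost, Finset.mul_sum]
  rw [Finset.sum_comm]
  exact Finset.sum_congr rfl fun r _ => Finset.sum_congr rfl fun s _ => by
    rw [dist_comm]; ring

lemma sum_mul_rowCost_le (hB : IsStochastic B) (hC : IsStochastic C) (hπ : ∀ i, 0 ≤ π i)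
    {w : Fin n → X} (hw : ∀ i r, rowCost p B z i (w i) ≤ rowCost p B z i (z r)) :
    ∑ i, π i * rowCost p B z i (w i) ≤ ∑ i, ∑ j, π i * C i j * pairCost p B z i j := by
  simp only [mul_assoc, ← Finset.mul_sum]
  exact Finset.sum_le_sum fun i _ =>
    mul_le_mul_of_nonneg_left (rowCost_le_sum_mul_pairCost hB hC (hw i)) (hπ i)

lemma dist_rpow_le_rowCost_add_pairCost_add (hp : 1 ≤ p) (hB : IsStochastic B) (i j : Fin n)
    (x y : X) :
    dist x y ^ p ≤ 3 ^ (p - 1) * (rowCost p B z i x + pairCost p B z i j + rowCost p B z j y) := by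
  calc dist x y ^ p = ∑ r, ∑ s, B i r * B j s * dist x y ^ p := by
        simp only [mul_assoc, ← Finset.mul_sum, hB.sum_mul_const]
    _ ≤ ∑ r, ∑ s, B i r * B j s *
        (3 ^ (p - 1) * (dist x (z r) ^ p + dist (z r) (z s) ^ p + dist (z s) y ^ p)) := by
        gcongr with r _ s _
        · exact mul_nonneg (hB.1 i r) (hB.1 j s)
        · exact dist_rpow_le_three_rpow_mul hp _ _ _ _
    _ = 3 ^ (p - 1) * ∑ r, ∑ s, B i r * B j s *
        (dist x (z r) ^ p + dist (z r) (z s) ^ p + dist (z s) y ^ p) := by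
        simp only [mul_left_comm _ ((3 : ℝ) ^ (p - 1)), ← Finset.mul_sum]
    _ = _ := by
        rw [hB.sum_sum_mul_mul_add_add i j (fun r => dist x (z r) ^ p)
          (fun s => dist (z s) y ^ p) (fun r s => dist (z r) (z s) ^ p)]
        simp only [rowCost, pairCost, dist_comm y]

lemma sum_mul_dist_rpow_le (hp : 1 ≤ p) (hB : IsStochastic B) (hC : IsStochastic C)
    (hπ : ∀ i, 0 ≤ π i) (hrev : IsReversible C π) {w : Fin n → X}
    (hw : ∀ i r, rowCost p B z i (w i) ≤ rowCost p B z i (z r)) :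
    ∑ i, ∑ j, π i * C i j * dist (w i) (w j) ^ p ≤
      3 ^ p * ∑ i, ∑ j, π i * C i j * pairCost p B z i j := by
  set T := ∑ i, ∑ j, π i * C i j * pairCost p B z i j
  have hT := sum_mul_rowCost_le hB hC hπ hw
  calc _ ≤ ∑ i, ∑ j, π i * C i j * (3 ^ (p - 1) *
        (rowCost p B z i (w i) + pairCost p B z i j + rowCost p B z j (w j))) := by
        gcongr with i _ j _
        · exact mul_nonneg (hπ i) (hC.1 i j)
        · exact dist_rpow_le_rowCost_add_pairCost_add hp hB i j _ _
    _ = 3 ^ (p - 1) * (2 * ∑ i, π i * rowCost p B z i (w i) + T) := by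
        simp only [mul_left_comm _ ((3 : ℝ) ^ (p - 1)), ← Finset.mul_sum]
        rw [hrev.sum_sum_mul_add_add hC]
    _ ≤ 3 ^ (p - 1) * (2 * T + T) := by gcongr
    _ = 3 ^ p * T := by rw [Real.rpow_sub_one (by norm_num)]; ring

end

theorem statement16_general (m n : ℕ) (p : ℝ) (hp : 1 ≤ p)
    (B : Matrix (Fin n) (Fin m) ℝ) (C : Matrix (Fin n) (Fin n) ℝ)
    (hB : IsStochastic B) (hC : IsStochastic C)
    (π : Fin n → ℝ) (hπ : IsProbVec π) (hrev : IsReversible C π)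
    (X : Type*) [MetricSpace X] (z : Fin m → X) :
    ∃ w : Fin n → X,
      max (∑ i, ∑ r, π i * B i r * dist (w i) (z r) ^ p)
          (∑ i, ∑ j, π i * C i j * dist (w i) (w j) ^ p) ≤
        (3 : ℝ) ^ p *
          ∑ r, ∑ s, (B.transpose * Matrix.diagonal π * C * B) r s * dist (z r) (z s) ^ p := by
  choose w hw using fun i => exists_rowCost_le (p := p) (z := z) hB i
  have hT := sum_mul_rowCost_le hB hC hπ.1 hw
  have hT0 : 0 ≤ ∑ i, π i * rowCost p B z i (w i) :=
    Finset.sum_nonneg fun i _ => mul_nonneg (hπ.1 i)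
      (Finset.sum_nonneg fun r _ => mul_nonneg (hB.1 i r) (Real.rpow_nonneg dist_nonneg p))
  refine ⟨w, ?_⟩
  rw [Matrix.sum_transpose_mul_diagonal_mul_mul_apply_mul]
  refine max_le ?_ (sum_mul_dist_rpow_le hp hB hC hπ.1 hrev hw)
  calc _ = ∑ i, π i * rowCost p B z i (w i) := by simp only [rowCost, Finset.mul_sum, mul_assoc]
    _ ≤ _ := hT
    _ ≤ _ := le_mul_of_one_le_left (hT0.trans hT) (Real.one_le_rpow (by norm_num) (by linarith))

theorem statement16 (m n : ℕ) (p : ℝ) (hp : 1 ≤ p) (hm : 0 < m) (hn : 0 < n)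
    (B : Matrix (Fin n) (Fin m) ℝ) (C : Matrix (Fin n) (Fin n) ℝ)
    (hB : IsStochastic B) (hC : IsStochastic C)
    (π : Fin n → ℝ) (hπ : IsProbVec π) (hrev : IsReversible C π)
    (X : Type*) [MetricSpace X] (z : Fin m → X) :
    ∃ w : Fin n → X,
      max (∑ i, ∑ r, π i * B i r * dist (w i) (z r) ^ p)
          (∑ i, ∑ j, π i * C i j * dist (w i) (w j) ^ p) ≤
        (3 : ℝ) ^ p *
          ∑ r, ∑ s, (B.transpose * Matrix.diagonal π * C * B) r s * dist (z r) (z s) ^ p :=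
  statement16_general m n p hp B C hB hC π hπ hrev X z
end
end
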